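/- arXiv:1603.07241 — 4 statements merged into one kernel-verified Lean document; each statement's English description precedes it below -/
import Mathlib

section
/- Let Q_{s,ρ} = (−s, 0] × B_ρ ⊂ ℝ^{n+1} and, for a > 0, Q_{as,aρ} = (−as, 0] × B_{aρ}. Let q ∈ [1,∞), K > 0, and let g ∈ L^q(Q_{2s,2ρ}) be positive. If ⨍⨍_{Q_{s,ρ}} g^q dx dt ≤ K ⨍⨍_{Q_{s,ρ}} |g − (g)_{Q_{s,ρ}}|^q dx dt, then for every a ∈ (1,2], ⨍⨍_{Q_{as,aρ}} g^q dx dt ≤ c(q) [ a^{n+1}(2K+1) + 1 ] ⨍⨍_{Q_{as,aρ}} |g − (g)_{Q_{as,aρ}}|^q dx dt, where c(q) depends only on q. -/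
open MeasureTheory Set
open scoped ENNReal RealInnerProductSpace

noncomputable section

/-- `n`-dimensional Euclidean space. -/
abbrev Spc (n : ℕ) : Type := EuclideanSpace ℝ (Fin n)

/-- Space-time points `(t, x)`. -/
abbrev SpT (n : ℕ) : Type := ℝ × Spc n

variable {n : ℕ}

/-- Backward space-time cylinder `(t₀ - τ, t₀] × B_ρ(x₀)` with vertex `z₀ = (t₀, x₀)`. -/
def cylQ (z₀ : SpT n) (τ ρ : ℝ) : Set (SpT n) :=
  Set.Ioc (z₀.1 - τ) z₀.1 ×ˢ Metric.ball z₀.2 ρ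

/-- Open backward space-time cylinder `(t₀ - τ, t₀) × B_ρ(x₀)`. -/
def cylO (z₀ : SpT n) (τ ρ : ℝ) : Set (SpT n) :=
  Set.Ioo (z₀.1 - τ) z₀.1 ×ˢ Metric.ball z₀.2 ρ

/-- Centered space-time cylinder `(t₀ - τ, t₀ + τ) × B_ρ(x₀)`. -/
def cylC (z₀ : SpT n) (τ ρ : ℝ) : Set (SpT n) :=
  Set.Ioo (z₀.1 - τ) (z₀.1 + τ) ×ˢ Metric.ball z₀.2 ρ

/-- Centered space-time cylinder `(t₀ - s/2, t₀ + s/2) × B_r(x₀)` of total height `s`. -/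
def cylH (z₀ : SpT n) (s r : ℝ) : Set (SpT n) :=
  Set.Ioo (z₀.1 - s / 2) (z₀.1 + s / 2) ×ˢ Metric.ball z₀.2 r

/-- Time derivative of a test function. -/
def dt (φ : SpT n → ℝ) (z : SpT n) : ℝ := fderiv ℝ φ z (1, 0)

/-- Spatial partial derivative of a test function. -/
def dxi (φ : SpT n → ℝ) (i : Fin n) (z : SpT n) : ℝ :=
  fderiv ℝ φ z (0, EuclideanSpace.single i 1)

/-- Spatial gradient of a (smooth) function on space-time, as a Euclidean vector. -/
def sgrad (φ : SpT n → ℝ) (z : SpT n) : Spc n :=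
  (WithLp.equiv 2 (Fin n → ℝ)).symm fun i => dxi φ i z

/-- Smooth test functions compactly supported in `U`. -/
def IsTestOn (U : Set (SpT n)) (φ : SpT n → ℝ) : Prop :=
  ContDiff ℝ (⊤ : ℕ∞) φ ∧ HasCompactSupport φ ∧ tsupport φ ⊆ U

/-- `G` is the weak spatial gradient of `v` on `U`. -/
def IsWeakSpatialGradOn (U : Set (SpT n)) (v : SpT n → ℝ) (G : SpT n → Spc n) : Prop :=
  ∀ φ : SpT n → ℝ, IsTestOn U φ → ∀ i : Fin n,
    ∫ z in U, v z * dxi φ i z = - ∫ z in U, G z i * φ z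

/-- The structure (ellipticity and growth) conditions on the vector field `A`. -/
def StructCond (m ν L : ℝ) (U : Set (SpT n)) (A : SpT n → ℝ → Spc n → Spc n) : Prop :=
  ∀ᵐ z ∂(volume.restrict U), ∀ (v : ℝ) (ξ : Spc n), 0 ≤ v →
    (ν * m * v ^ (m - 1) * ‖ξ‖ ^ 2 ≤ ⟪A z v ξ, ξ⟫ ∧
      ‖A z v ξ‖ ≤ L * m * v ^ (m - 1) * ‖ξ‖)

/-- `u ≥ 0` is a local weak solution of `u_t - div A(x,t,u,Du) = f` on `U`, with a.e. spatial
gradient `Du` and with `DuPow` the weak spatial gradient of `u^{(m+1)/2}`. -/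
structure IsLocalWeakSolution (m ν L : ℝ) (U : Set (SpT n))
    (u f : SpT n → ℝ) (A : SpT n → ℝ → Spc n → Spc n)
    (Du DuPow : SpT n → Spc n) : Prop where
  u_nonneg : ∀ z, 0 ≤ u z
  u_meas : Measurable u
  f_nonneg : ∀ z, 0 ≤ f z
  f_meas : Measurable f
  Du_meas : Measurable Du
  DuPow_meas : Measurable DuPow
  A_meas : Measurable fun p : SpT n × ℝ × Spc n => A p.1 p.2.1 p.2.2
  struct : StructCond m ν L U A
  f_locInt : ∀ K : Set (SpT n), K ⊆ U → IsCompact K →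
    IntegrableOn (fun z => f z ^ ((m + 1) / (m - 1))) K
  u_locInt : ∀ K : Set (SpT n), K ⊆ U → IsCompact K →
    IntegrableOn (fun z => u z ^ (2 : ℕ)) K
  grad_locInt : ∀ K : Set (SpT n), K ⊆ U → IsCompact K →
    IntegrableOn (fun z => ‖DuPow z‖ ^ (2 : ℕ)) K
  Du_rel : ∀ᵐ z ∂(volume.restrict U),
    (m * u z ^ (m - 1)) • Du z = (2 * m / (m + 1) * u z ^ ((m - 1) / 2)) • DuPow z
  weak_grad : IsWeakSpatialGradOn U (fun z => u z ^ ((m + 1) / 2)) DuPow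
  weak_sol : ∀ φ : SpT n → ℝ, IsTestOn U φ →
    ∫ z in U, (-(u z * dt φ z) + ⟪A z (u z) (Du z), sgrad φ z⟫)
      = ∫ z in U, f z * φ z

/-- The parabolic space-time domain `E_T = E × (0,T)` (as a set of points `(t,x)`). -/
def parDomain (E : Set (Spc n)) (T : ℝ) : Set (SpT n) := Set.Ioo (0 : ℝ) T ×ˢ E

private lemma convexAbsRpow {q : ℝ} (hq : 1 ≤ q) :
    ConvexOn ℝ Set.univ (fun x : ℝ => |x| ^ q) := by
  have himg : abs '' (Set.univ : Set ℝ) = Set.Ici 0 := by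
    ext x
    constructor
    · rintro ⟨y, -, rfl⟩; exact abs_nonneg y
    · intro hx; exact ⟨x, trivial, abs_of_nonneg hx⟩
  have hg : ConvexOn ℝ (abs '' (Set.univ : Set ℝ)) (fun x : ℝ => x ^ q) := by
    rw [himg]; exact convexOn_rpow hq
  have hmono : MonotoneOn (fun x : ℝ => x ^ q) (abs '' (Set.univ : Set ℝ)) := by
    rw [himg]
    intro x hx y _ hxy
    exact Real.rpow_le_rpow hx hxy (le_trans zero_le_one hq)
  have habs : ConvexOn ℝ (Set.univ : Set ℝ) (abs : ℝ → ℝ) := by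
    refine ⟨convex_univ, fun x _ y _ a b ha hb _ => ?_⟩
    simp only [smul_eq_mul]
    calc |a * x + b * y| ≤ |a * x| + |b * y| := abs_add_le _ _
      _ = a * |x| + b * |y| := by rw [abs_mul, abs_mul, abs_of_nonneg ha, abs_of_nonneg hb]
  exact hg.comp habs hmono

private lemma contAbsRpow {q : ℝ} (hq : 1 ≤ q) : Continuous (fun x : ℝ => |x| ^ q) := by
  have h : Continuous (fun x : ℝ => x ^ q) :=
    continuous_iff_continuousAt.2 fun x =>
      Real.continuousAt_rpow_const x q (Or.inr (by linarith))
  exact h.comp continuous_abs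

private lemma add_abs_rpow_le {q : ℝ} (hq : 1 ≤ q) (x y : ℝ) :
    |x + y| ^ q ≤ 2 ^ (q - 1) * (|x| ^ q + |y| ^ q) := by
  have h1 : |x + y| ^ q ≤ (|x| + |y|) ^ q :=
    Real.rpow_le_rpow (abs_nonneg _) (abs_add_le x y) (by linarith)
  have h2 := NNReal.rpow_add_le_mul_rpow_add_rpow ‖x‖₊ ‖y‖₊ hq
  have h2' := NNReal.coe_le_coe.2 h2
  push_cast at h2'
  simp only [coe_nnnorm, Real.norm_eq_abs] at h2'
  linarith

section AvgAux
variable {α : Type*} [MeasureSpace α] {S : Set α}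

private lemma restrict_finite (h : volume S ≠ ∞) : IsFiniteMeasure (volume.restrict S) :=
  ⟨by rwa [Measure.restrict_apply_univ, lt_top_iff_ne_top]⟩

private lemma avg_nonneg' {f : α → ℝ} (hf : ∀ z, 0 ≤ f z) : 0 ≤ ⨍ x in S, f x := by
  rw [setAverage_eq]
  exact smul_nonneg (by positivity) (integral_nonneg hf)

private lemma avg_mono' (hS : MeasurableSet S) {f g : α → ℝ}
    (hfi : IntegrableOn f S) (hgi : IntegrableOn g S)
    (hfg : ∀ z ∈ S, f z ≤ g z) : (⨍ x in S, f x) ≤ ⨍ x in S, g x := by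
  rw [setAverage_eq, setAverage_eq]
  exact smul_le_smul_of_nonneg_left (setIntegral_mono_on hfi hgi hS hfg) (by positivity)

private lemma avg_congr' (hS : MeasurableSet S) {f g : α → ℝ}
    (hfg : ∀ z ∈ S, f z = g z) : (⨍ x in S, f x) = ⨍ x in S, g x := by
  rw [setAverage_eq, setAverage_eq, setIntegral_congr_fun hS hfg]

private lemma avg_combo (h0 : volume S ≠ 0) (hfin : volume S ≠ ∞) {f : α → ℝ}
    (hf : IntegrableOn f S) (c d : ℝ) :
    (⨍ x in S, (c * f x + d)) = c * (⨍ x in S, f x) + d := by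
  haveI := restrict_finite hfin
  rw [setAverage_eq, setAverage_eq,
    integral_add (hf.const_mul c) (integrable_const d), integral_const_mul, integral_const,
    measureReal_restrict_apply_univ]
  have hV : (volume S).toReal ≠ 0 := ENNReal.toReal_ne_zero.2 ⟨h0, hfin⟩
  simp only [smul_eq_mul, measureReal_def]
  field_simp

private lemma avg_subset_le {T : Set α} (hST : S ⊆ T)
    (hS0 : volume S ≠ 0) (hTfin : volume T ≠ ∞) {f : α → ℝ} (h0 : ∀ z, 0 ≤ f z)
    (hint : IntegrableOn f T) {A : ℝ}
    (hA : (volume T).toReal = A * (volume S).toReal) :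
    (⨍ z in S, f z) ≤ A * ⨍ z in T, f z := by
  have hSfin : volume S ≠ ∞ := fun h =>
    hTfin (top_le_iff.1 (h ▸ measure_mono hST))
  have hVS : 0 < (volume S).toReal := ENNReal.toReal_pos hS0 hSfin
  have hVT : 0 < (volume T).toReal :=
    ENNReal.toReal_pos (fun h => hS0 (le_antisymm (h ▸ measure_mono hST) zero_le)) hTfin
  have hI : (∫ z in S, f z) ≤ ∫ z in T, f z :=
    setIntegral_mono_set hint (Filter.Eventually.of_forall h0)
      (HasSubset.Subset.eventuallyLE hST)
  rw [setAverage_eq, setAverage_eq]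
  simp only [smul_eq_mul, measureReal_def]
  rw [show A * ((volume T).toReal⁻¹ * ∫ z in T, f z)
      = (volume S).toReal⁻¹ * ((A * (volume S).toReal / (volume T).toReal) * ∫ z in T, f z) by
    field_simp]
  rw [← hA, div_self hVT.ne', one_mul]
  exact mul_le_mul_of_nonneg_left hI (by positivity)

private lemma jensen_set {q : ℝ} (hq : 1 ≤ q)
    (h0 : volume S ≠ 0) (hfin : volume S ≠ ∞) {f : α → ℝ}
    (hf : IntegrableOn f S) (hfq : IntegrableOn (fun x => |f x| ^ q) S) :
    |⨍ x in S, f x| ^ q ≤ ⨍ x in S, |f x| ^ q := by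
  haveI := restrict_finite hfin
  haveI : NeZero (volume.restrict S) := ⟨by simpa [Measure.restrict_eq_zero] using h0⟩
  exact (convexAbsRpow hq).map_average_le (contAbsRpow hq).continuousOn isClosed_univ
    (Filter.Eventually.of_forall fun _ => mem_univ _) hf hfq

private lemma integrable_self_of_rpow {q : ℝ} (hq : 1 ≤ q) (hfin : volume S ≠ ∞)
    {g : α → ℝ} (hg : Measurable g)
    (hgq : IntegrableOn (fun z => |g z| ^ q) S) : IntegrableOn g S := by
  haveI := restrict_finite hfin
  refine Integrable.mono' (g := fun z => |g z| ^ q + 1)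
    (hgq.add (integrable_const 1)) hg.aestronglyMeasurable
    (Filter.Eventually.of_forall fun z => ?_)
  rw [Real.norm_eq_abs]
  show |g z| ≤ |g z| ^ q + 1
  rcases le_or_gt (|g z|) 1 with h | h
  · nlinarith [Real.rpow_nonneg (abs_nonneg (g z)) q]
  · calc |g z| = |g z| ^ (1 : ℝ) := (Real.rpow_one _).symm
      _ ≤ |g z| ^ q := Real.rpow_le_rpow_of_exponent_le h.le hq
      _ ≤ |g z| ^ q + 1 := by linarith

private lemma integrable_shift {q : ℝ} (hq : 1 ≤ q) (hfin : volume S ≠ ∞)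
    {g : α → ℝ} (hg : Measurable g)
    (hgq : IntegrableOn (fun z => |g z| ^ q) S) (c : ℝ) :
    IntegrableOn (fun z => |g z - c| ^ q) S := by
  haveI := restrict_finite hfin
  refine Integrable.mono' (g := fun z => 2 ^ (q - 1) * (|g z| ^ q + |c| ^ q))
    (((hgq.add (integrable_const _)).const_mul _))
    ((contAbsRpow hq).measurable.comp (hg.sub measurable_const)).aestronglyMeasurable
    (Filter.Eventually.of_forall fun z => ?_)
  rw [Real.norm_eq_abs, abs_of_nonneg (Real.rpow_nonneg (abs_nonneg _) q)]
  have := add_abs_rpow_le hq (g z) (-c)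
  simpa [sub_eq_add_neg] using this

end AvgAux

private lemma final_arith {P A K X Z Y D Gq Gaq : ℝ} (hP1 : 1 ≤ P) (hA1 : 1 ≤ A)
    (hK : 0 < K) (hX0 : 0 ≤ X)
    (h3 : Gq ≤ K * Y) (h4 : D ≤ Z) (h5 : Z ≤ A * X)
    (h6 : Y ≤ P * Z + P * D) (h2 : Gaq ≤ P * (Gq + D)) :
    P * X + P * Gaq ≤ 8 * P ^ 3 * (A * (2 * K + 1) + 1) * X := by
  have hP0 : (0:ℝ) < P := by linarith
  have hA0 : (0:ℝ) ≤ A := by linarith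
  have hAX : 0 ≤ A * X := mul_nonneg hA0 hX0
  have hD' : D ≤ A * X := h4.trans h5
  have hY' : Y ≤ 2 * P * (A * X) := by
    nlinarith [mul_le_mul_of_nonneg_left h5 hP0.le, mul_le_mul_of_nonneg_left hD' hP0.le]
  have hG' : Gq ≤ 2 * P * A * K * X := by
    nlinarith [mul_le_mul_of_nonneg_left hY' hK.le]
  have hGa' : Gaq ≤ P * (2 * P * A * K * X + A * X) := by
    nlinarith [mul_le_mul_of_nonneg_left (add_le_add hG' hD') hP0.le]
  have hmain := mul_le_mul_of_nonneg_left hGa' hP0.le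
  have hP3a : P ^ 2 ≤ P ^ 3 := by nlinarith [sq_nonneg P]
  have hP3b : P ≤ P ^ 3 := by nlinarith [sq_nonneg P, sq_nonneg (P - 1), sq_nonneg (P + 1)]
  have t1 : 0 ≤ P ^ 3 * (A * (K * X)) :=
    mul_nonneg (pow_nonneg hP0.le 3) (mul_nonneg hA0 (mul_nonneg hK.le hX0))
  have t2 : P ^ 2 * (A * X) ≤ 8 * P ^ 3 * (A * X) :=
    mul_le_mul_of_nonneg_right (by nlinarith [hP3a]) hAX
  have t3 : P * X ≤ 8 * P ^ 3 * X :=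
    mul_le_mul_of_nonneg_right (by nlinarith [hP3b]) hX0
  nlinarith [hmain, t1, t2, t3]


/-- **Lemma 4.2 (Enlarging the cylinder in a mean-comparison estimate).**
If a positive `g ∈ L^q(Q_{2s,2ρ})` satisfies
`⨍⨍_{Q_{s,ρ}} g^q ≤ K ⨍⨍_{Q_{s,ρ}} |g − (g)_{Q_{s,ρ}}|^q`, then for every `a ∈ (1,2]`,
`⨍⨍_{Q_{as,aρ}} g^q ≤ c(q) [a^{n+1}(2K+1)+1] ⨍⨍_{Q_{as,aρ}} |g − (g)_{Q_{as,aρ}}|^q`,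
with `c(q)` depending only on `q`. -/
theorem enlarge_cylinder_mean_comparison (q : ℝ) (hq : 1 ≤ q) :
    ∃ c : ℝ, 0 < c ∧
      ∀ (n : ℕ) (s ρ K : ℝ) (g : SpT n → ℝ),
        0 < s → 0 < ρ → 0 < K →
        (∀ z ∈ cylQ (0 : SpT n) (2 * s) (2 * ρ), 0 < g z) →
        Measurable g →
        IntegrableOn (fun z => |g z| ^ q) (cylQ (0 : SpT n) (2 * s) (2 * ρ)) →
        (⨍ z in cylQ (0 : SpT n) s ρ, g z ^ q)
          ≤ K * ⨍ z in cylQ (0 : SpT n) s ρ,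
              |g z - ⨍ w in cylQ (0 : SpT n) s ρ, g w| ^ q →
        ∀ a : ℝ, 1 < a → a ≤ 2 →
          (⨍ z in cylQ (0 : SpT n) (a * s) (a * ρ), g z ^ q)
            ≤ c * (a ^ (n + 1) * (2 * K + 1) + 1) *
              ⨍ z in cylQ (0 : SpT n) (a * s) (a * ρ),
                |g z - ⨍ w in cylQ (0 : SpT n) (a * s) (a * ρ), g w| ^ q := by
  set P : ℝ := 2 ^ (q - 1) with hPdef
  have hP1 : 1 ≤ P := by
    rw [hPdef]
    calc (1:ℝ) = 2 ^ (0:ℝ) := (Real.rpow_zero 2).symm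
      _ ≤ 2 ^ (q - 1) := Real.rpow_le_rpow_of_exponent_le one_le_two (by linarith)
  have hP0 : (0:ℝ) < P := lt_of_lt_of_le one_pos hP1
  refine ⟨8 * P ^ 3, by positivity, ?_⟩
  intro n s ρ K g hs hρ hK hgpos hgmeas hgint hmean a ha1 ha2
  have ha0 : (0:ℝ) < a := by linarith
  -- cylinder volumes
  have hvol : ∀ τ r : ℝ, 0 < r → volume (cylQ (0 : SpT n) τ r)
      = ENNReal.ofReal τ *
        (ENNReal.ofReal (r ^ n) * volume (Metric.ball (0 : Spc n) 1)) := by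
    intro τ r hr
    have e : cylQ (0 : SpT n) τ r
        = Set.Ioc ((0:ℝ) - τ) (0:ℝ) ×ˢ Metric.ball (0 : Spc n) r := rfl
    rw [e, Measure.volume_eq_prod, Measure.prod_prod, Real.volume_Ioc,
      Measure.addHaar_ball_of_pos volume (0 : Spc n) hr, finrank_euclideanSpace_fin,
      show (0:ℝ) - ((0:ℝ) - τ) = τ by ring]
  -- subset facts
  have hsub : ∀ τ₁ τ₂ r₁ r₂ : ℝ, τ₁ ≤ τ₂ → r₁ ≤ r₂ →
      cylQ (0 : SpT n) τ₁ r₁ ⊆ cylQ (0 : SpT n) τ₂ r₂ := by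
    intro τ₁ τ₂ r₁ r₂ h1 h2
    exact Set.prod_mono (Set.Ioc_subset_Ioc (by simp; linarith) le_rfl)
      (Metric.ball_subset_ball h2)
  have hBfin : volume (Metric.ball (0 : Spc n) 1) ≠ ∞ := measure_ball_lt_top.ne
  have hvolQ := hvol s ρ hρ
  have hvolQa := hvol (a * s) (a * ρ) (by positivity)
  have hQ0 : volume (cylQ (0 : SpT n) s ρ) ≠ 0 := by
    rw [hvolQ]
    refine mul_ne_zero ?_ (mul_ne_zero ?_ (Metric.measure_ball_pos volume _ one_pos).ne')
    · simpa [ENNReal.ofReal_eq_zero, not_le] using hs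
    · simpa [ENNReal.ofReal_eq_zero, not_le] using pow_pos hρ n
  have hQa0 : volume (cylQ (0 : SpT n) (a * s) (a * ρ)) ≠ 0 := by
    rw [hvolQa]
    refine mul_ne_zero ?_ (mul_ne_zero ?_ (Metric.measure_ball_pos volume _ one_pos).ne')
    · simpa [ENNReal.ofReal_eq_zero, not_le] using mul_pos ha0 hs
    · simpa [ENNReal.ofReal_eq_zero, not_le] using pow_pos (mul_pos ha0 hρ) n
  have hQfin : volume (cylQ (0 : SpT n) s ρ) ≠ ∞ := by
    rw [hvolQ]
    exact ENNReal.mul_ne_top ENNReal.ofReal_ne_top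
      (ENNReal.mul_ne_top ENNReal.ofReal_ne_top hBfin)
  have hQafin : volume (cylQ (0 : SpT n) (a * s) (a * ρ)) ≠ ∞ := by
    rw [hvolQa]
    exact ENNReal.mul_ne_top ENNReal.ofReal_ne_top
      (ENNReal.mul_ne_top ENNReal.ofReal_ne_top hBfin)
  have hVA : (volume (cylQ (0 : SpT n) (a * s) (a * ρ))).toReal
      = a ^ (n + 1) * (volume (cylQ (0 : SpT n) s ρ)).toReal := by
    rw [hvolQ, hvolQa, ENNReal.toReal_mul, ENNReal.toReal_mul, ENNReal.toReal_mul,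
      ENNReal.toReal_mul, ENNReal.toReal_ofReal (by positivity : (0:ℝ) ≤ a * s),
      ENNReal.toReal_ofReal (by positivity : (0:ℝ) ≤ (a * ρ) ^ n),
      ENNReal.toReal_ofReal hs.le, ENNReal.toReal_ofReal (by positivity : (0:ℝ) ≤ ρ ^ n),
      mul_pow]
    ring
    -- abbreviations
  set Q := cylQ (0 : SpT n) s ρ with hQdef
  set Qa := cylQ (0 : SpT n) (a * s) (a * ρ) with hQadef
  have hQm : MeasurableSet Q := measurableSet_Ioc.prod measurableSet_ball
  have hQam : MeasurableSet Qa := measurableSet_Ioc.prod measurableSet_ball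
  have hQsubA : Q ⊆ Qa := hsub s (a * s) ρ (a * ρ) (by nlinarith) (by nlinarith)
  have hAsub2 : Qa ⊆ cylQ (0 : SpT n) (2 * s) (2 * ρ) :=
    hsub (a * s) (2 * s) (a * ρ) (2 * ρ) (by nlinarith) (by nlinarith)
  haveI := restrict_finite hQfin
  haveI := restrict_finite hQafin
  set G := ⨍ w in Q, g w with hGdef
  set Ga := ⨍ w in Qa, g w with hGadef
  set X := ⨍ z in Qa, |g z - Ga| ^ q with hXdef
  set Y := ⨍ z in Q, |g z - G| ^ q with hYdef
  set Z := ⨍ z in Q, |g z - Ga| ^ q with hZdef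
  -- integrability
  have hIqQa : IntegrableOn (fun z => |g z| ^ q) Qa := hgint.mono_set hAsub2
  have hIqQ : IntegrableOn (fun z => |g z| ^ q) Q := hIqQa.mono_set hQsubA
  have hgQa : IntegrableOn g Qa := integrable_self_of_rpow hq hQafin hgmeas hIqQa
  have hgQ : IntegrableOn g Q := hgQa.mono_set hQsubA
  have hshiftQa : IntegrableOn (fun z => |g z - Ga| ^ q) Qa :=
    integrable_shift hq hQafin hgmeas hIqQa Ga
  have hshiftQGa : IntegrableOn (fun z => |g z - Ga| ^ q) Q := hshiftQa.mono_set hQsubA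
  have hshiftQG : IntegrableOn (fun z => |g z - G| ^ q) Q :=
    integrable_shift hq hQfin hgmeas hIqQ G
  -- nonnegativity of averages
  have hX0 : 0 ≤ X := avg_nonneg' fun z => Real.rpow_nonneg (abs_nonneg _) q
  have hZ0 : 0 ≤ Z := avg_nonneg' fun z => Real.rpow_nonneg (abs_nonneg _) q
  -- Jensen over Q for g : |G|^q ≤ K * Y
  have havgQ : (⨍ z in Q, |g z| ^ q) = ⨍ z in Q, g z ^ q :=
    avg_congr' hQm fun z hz => by rw [abs_of_pos (hgpos z (hAsub2 (hQsubA hz)))]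
  have hJ1 : |G| ^ q ≤ ⨍ z in Q, |g z| ^ q := jensen_set hq hQ0 hQfin hgQ hIqQ
  have h3 : |G| ^ q ≤ K * Y := by
    rw [havgQ] at hJ1
    exact hJ1.trans hmean
  -- Jensen over Q for g - Ga : |G - Ga|^q ≤ Z
  have hGsub : (⨍ z in Q, (g z - Ga)) = G - Ga := by
    have h := avg_combo hQ0 hQfin hgQ 1 (-Ga)
    simpa [one_mul, ← sub_eq_add_neg] using h
  have h4 : |G - Ga| ^ q ≤ Z := by
    have hJ2 := jensen_set hq hQ0 hQfin (hgQ.sub (integrable_const Ga))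
      (f := fun z => g z - Ga) hshiftQGa
    rwa [hGsub] at hJ2
  -- enlarging : Z ≤ a^(n+1) * X
  have h5 : Z ≤ a ^ (n + 1) * X :=
    avg_subset_le hQsubA hQ0 hQafin (fun z => Real.rpow_nonneg (abs_nonneg _) q)
      hshiftQa hVA
  -- Y ≤ P * Z + P * |G - Ga|^q
  have h6 : Y ≤ P * Z + P * |G - Ga| ^ q := by
    have hmono := avg_mono' (g := fun x => P * |g x - Ga| ^ q + P * |G - Ga| ^ q) hQm hshiftQG
      ((hshiftQGa.const_mul P).add (integrable_const (P * |G - Ga| ^ q)))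
      (fun z _ => by
        have h := add_abs_rpow_le hq (g z - Ga) (Ga - G)
        rw [show g z - Ga + (Ga - G) = g z - G by ring, abs_sub_comm Ga G] at h
        calc |g z - G| ^ q ≤ P * (|g z - Ga| ^ q + |G - Ga| ^ q) := h
          _ = P * |g z - Ga| ^ q + P * |G - Ga| ^ q := by ring)
    rwa [avg_combo hQ0 hQfin hshiftQGa P (P * |G - Ga| ^ q)] at hmono
  -- |Ga|^q ≤ P * (|G|^q + |G - Ga|^q)
  have h2 : |Ga| ^ q ≤ P * (|G| ^ q + |G - Ga| ^ q) := by
    have h := add_abs_rpow_le hq G (Ga - G)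
    rw [show G + (Ga - G) = Ga by ring, abs_sub_comm Ga G] at h
    exact h
  -- main estimate over Qa
  have havgQa : (⨍ z in Qa, g z ^ q) = ⨍ z in Qa, |g z| ^ q :=
    (avg_congr' hQam fun z hz => by rw [abs_of_pos (hgpos z (hAsub2 hz))]).symm
  have h1 : (⨍ z in Qa, g z ^ q) ≤ P * X + P * |Ga| ^ q := by
    rw [havgQa]
    have hmono := avg_mono' (g := fun x => P * |g x - Ga| ^ q + P * |Ga| ^ q) hQam hIqQa
      ((hshiftQa.const_mul P).add (integrable_const (P * |Ga| ^ q)))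
      (fun z _ => by
        have h := add_abs_rpow_le hq (g z - Ga) Ga
        rw [show g z - Ga + Ga = g z by ring] at h
        calc |g z| ^ q ≤ P * (|g z - Ga| ^ q + |Ga| ^ q) := h
          _ = P * |g z - Ga| ^ q + P * |Ga| ^ q := by ring)
    rwa [avg_combo hQa0 hQafin hshiftQa P (P * |Ga| ^ q)] at hmono
  -- final arithmetic
  have hA1 : (1:ℝ) ≤ a ^ (n + 1) := one_le_pow₀ ha1.le
  exact h1.trans (final_arith hP1 hA1 hK hX0 h3 h4 h5 h6 h2)
end
end

section
/- Let N ∈ ℕ, σ ∈ (0,1), m > 1, and let u ∈ L^{m+1}(Q_{s,r}) be a nonnegative function, Q_{s,r} = (−s,0] × B_r ⊂ ℝ^{n+1}. If, for some ε ∈ (0, 1/((N/σⁿ)^{1/(m+1)} + 1)), u satisfies ( ⨍⨍_{Q_{s,r}} |u − (u)_{Q_{s,r}}|^{m+1} dx dt )^{1/(m+1)} ≤ ε ( ⨍⨍_{Q_{s,r}} u^{m+1} dx dt )^{1/(m+1)}, then for every k ∈ {0,…,N−1} and every r₁ ∈ [σr, r]: ( ⨍⨍_{Q_{s,r}} u^{m+1}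 )^{1/(m+1)} ≤ (1 − ((N/σⁿ)^{1/(m+1)} + 1)ε)^{−1} ( ⨍_{−s+ks/N}^{−s+(k+1)s/N} ⨍_{B_{r₁}} u^{m+1} dx dt )^{1/(m+1)} ≤ (N/σⁿ)^{1/(m+1)} (1 − ((N/σⁿ)^{1/(m+1)} + 1)ε)^{−1} ( ⨍⨍_{Q_{s,r}} u^{m+1} )^{1/(m+1)}. -/
open MeasureTheory Set
open scoped ENNReal RealInnerProductSpace

noncomputable section

variable {n : ℕ}

private lemma rpow_integral_minkowski' {α : Type*} [MeasurableSpace α] {μ : Measure α} {p : ℝ}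
    (hp : 1 ≤ p) {f g : α → ℝ} (hf : MemLp f (ENNReal.ofReal p) μ)
    (hg : MemLp g (ENNReal.ofReal p) μ) :
    (∫ x, |f x + g x| ^ p ∂μ) ^ (1 / p)
      ≤ (∫ x, |f x| ^ p ∂μ) ^ (1 / p) + (∫ x, |g x| ^ p ∂μ) ^ (1 / p) := by
  have hp0 : 0 < p := lt_of_lt_of_le one_pos hp
  set P := ENNReal.ofReal p with hP
  have hP0 : P ≠ 0 := (ENNReal.ofReal_pos.mpr hp0).ne'
  have hPt : P ≠ ∞ := ENNReal.ofReal_ne_top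
  have hP1 : 1 ≤ P := by
    rw [hP, ← ENNReal.ofReal_one]; exact ENNReal.ofReal_le_ofReal hp
  have hfg : MemLp (f + g) P μ := hf.add hg
  have key := eLpNorm_add_le hf.aestronglyMeasurable hg.aestronglyMeasurable hP1
  rw [hfg.eLpNorm_eq_integral_rpow_norm hP0 hPt, hf.eLpNorm_eq_integral_rpow_norm hP0 hPt,
    hg.eLpNorm_eq_integral_rpow_norm hP0 hPt,
    ← ENNReal.ofReal_add (Real.rpow_nonneg (integral_nonneg fun x => by positivity) _)
      (Real.rpow_nonneg (integral_nonneg fun x => by positivity) _)] at key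
  have hPr : P.toReal = p := ENNReal.toReal_ofReal hp0.le
  rw [hPr] at key
  have key2 := (ENNReal.ofReal_le_ofReal_iff (by positivity)).mp key
  simpa [Real.norm_eq_abs, one_div, Pi.add_apply] using key2

set_option maxHeartbeats 1000000 in
/-- **Lemma 4.4 (Comparability of means on sub-cylinders, non-degenerate regime).**
Let `N ∈ ℕ`, `σ ∈ (0,1)`, `m > 1`, and `u ∈ L^{m+1}(Q_{s,r})` nonnegative. If `u` satisfies
the non-degenerate condition with `ε ∈ (0, 1/((N/σⁿ)^{1/(m+1)} + 1))`, then the `(m+1)`-mean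
of `u` over any time-slab sub-cylinder `(−s+ks/N, −s+(k+1)s/N] × B_{r₁}`, `r₁ ∈ [σr, r]`,
is comparable from both sides with the `(m+1)`-mean over `Q_{s,r}`. -/
theorem subcylinder_mean_comparability
    (n N : ℕ) (σ m : ℝ) (hσ : σ ∈ Set.Ioo (0 : ℝ) 1) (hm : 1 < m)
    (s r : ℝ) (hs : 0 < s) (hr : 0 < r)
    (u : SpT n → ℝ) (hu : ∀ z, 0 ≤ u z) (hmeas : Measurable u)
    (hint : IntegrableOn (fun z => u z ^ (m + 1)) (cylQ (0 : SpT n) s r))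
    (ε : ℝ) (hε0 : 0 < ε)
    (hε : ε < 1 / (((N : ℝ) / σ ^ n) ^ (1 / (m + 1)) + 1))
    (hnd : (⨍ z in cylQ (0 : SpT n) s r,
          |u z - ⨍ w in cylQ (0 : SpT n) s r, u w| ^ (m + 1)) ^ (1 / (m + 1))
        ≤ ε * (⨍ z in cylQ (0 : SpT n) s r, u z ^ (m + 1)) ^ (1 / (m + 1)))
    (k : ℕ) (hk : k < N) (r₁ : ℝ) (hr₁ : σ * r ≤ r₁) (hr₁' : r₁ ≤ r) :
    (⨍ z in cylQ (0 : SpT n) s r, u z ^ (m + 1)) ^ (1 / (m + 1))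
      ≤ (1 - (((N : ℝ) / σ ^ n) ^ (1 / (m + 1)) + 1) * ε)⁻¹ *
        (⨍ z in (Set.Ioc (-s + (k : ℝ) * s / N) (-s + ((k : ℝ) + 1) * s / N)
              ×ˢ Metric.ball (0 : Spc n) r₁),
            u z ^ (m + 1)) ^ (1 / (m + 1))
    ∧
    (1 - (((N : ℝ) / σ ^ n) ^ (1 / (m + 1)) + 1) * ε)⁻¹ *
        (⨍ z in (Set.Ioc (-s + (k : ℝ) * s / N) (-s + ((k : ℝ) + 1) * s / N)
              ×ˢ Metric.ball (0 : Spc n) r₁),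
            u z ^ (m + 1)) ^ (1 / (m + 1))
      ≤ ((N : ℝ) / σ ^ n) ^ (1 / (m + 1)) *
          (1 - (((N : ℝ) / σ ^ n) ^ (1 / (m + 1)) + 1) * ε)⁻¹ *
          (⨍ z in cylQ (0 : SpT n) s r, u z ^ (m + 1)) ^ (1 / (m + 1)) := by
  obtain ⟨hσ0, hσ1⟩ := hσ
  have hN : (0 : ℝ) < N := by exact_mod_cast Nat.pos_of_ne_zero (by rintro rfl; exact Nat.not_lt_zero k hk)
  have hkN : (k : ℝ) + 1 ≤ N := by exact_mod_cast hk
  have hk0 : (0 : ℝ) ≤ k := Nat.cast_nonneg k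
  set p := m + 1 with hp_def
  have hp0 : 0 < p := by rw [hp_def]; linarith
  have hp1 : 1 ≤ p := by rw [hp_def]; linarith
  set c := ((N : ℝ) / σ ^ n) ^ (1 / p) with hc_def
  have hσn : (0 : ℝ) < σ ^ n := by positivity
  have hc0 : 0 ≤ c := Real.rpow_nonneg (by positivity) _
  set Q := cylQ (0 : SpT n) s r with hQ_def
  set QK := (Set.Ioc (-s + (k : ℝ) * s / N) (-s + ((k : ℝ) + 1) * s / N)
        ×ˢ Metric.ball (0 : Spc n) r₁) with hQK_def
  have hr₁0 : 0 < r₁ := lt_of_lt_of_le (by positivity) hr₁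
  -- subset
  have hsub : QK ⊆ Q := by
    rw [hQK_def, hQ_def]
    unfold cylQ
    simp only [Prod.fst_zero, Prod.snd_zero]
    apply Set.prod_mono
    · intro t ht
      simp only [Set.mem_Ioc] at ht ⊢
      have h1 : (0:ℝ) ≤ (k : ℝ) * s / N := by positivity
      have h2 : ((k : ℝ) + 1) * s / N ≤ s := by
        rw [div_le_iff₀ hN]
        have := mul_le_mul_of_nonneg_right hkN hs.le
        linarith only [this]
      constructor <;> [linarith only [ht.1, h1]; linarith only [ht.2, h2]]
    · exact Metric.ball_subset_ball hr₁'
  -- volumes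
  have hQvol : volume Q = ENNReal.ofReal s * volume (Metric.ball (0 : Spc n) r) := by
    rw [hQ_def]
    unfold cylQ
    rw [Measure.volume_eq_prod, Measure.prod_prod]
    simp [Real.volume_Ioc]
  have hKvol : volume QK = ENNReal.ofReal (s / N) * volume (Metric.ball (0 : Spc n) r₁) := by
    rw [hQK_def, Measure.volume_eq_prod, Measure.prod_prod, Real.volume_Ioc]
    congr 2
    field_simp
    ring
  set vB := (volume (Metric.ball (0 : Spc n) r)).toReal with hvB_def
  set vB₁ := (volume (Metric.ball (0 : Spc n) r₁)).toReal with hvB1_def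
  have hvBpos : 0 < vB := ENNReal.toReal_pos (Metric.measure_ball_pos _ _ hr).ne'
    (measure_ball_lt_top).ne
  have hvB1pos : 0 < vB₁ := ENNReal.toReal_pos (Metric.measure_ball_pos _ _ hr₁0).ne'
    (measure_ball_lt_top).ne
  have hQfin : volume Q < ∞ := by
    rw [hQvol]; exact ENNReal.mul_lt_top ENNReal.ofReal_lt_top measure_ball_lt_top
  have hKfin : volume QK < ∞ := by
    rw [hKvol]; exact ENNReal.mul_lt_top ENNReal.ofReal_lt_top measure_ball_lt_top
  set vQ := (volume Q).toReal with hvQ_def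
  set vK := (volume QK).toReal with hvK_def
  have hvQ : vQ = s * vB := by rw [hvQ_def, hQvol, ENNReal.toReal_mul, ENNReal.toReal_ofReal hs.le]
  have hvK : vK = s / N * vB₁ := by
    rw [hvK_def, hKvol, ENNReal.toReal_mul, ENNReal.toReal_ofReal (by positivity)]
  have hvQpos : 0 < vQ := by rw [hvQ]; positivity
  have hvKpos : 0 < vK := by rw [hvK]; positivity
  -- ball scaling
  have hball : σ ^ n * vB ≤ vB₁ := by
    have h1 : volume (Metric.ball (0 : Spc n) (σ * r))
        = ENNReal.ofReal (σ ^ n) * volume (Metric.ball (0 : Spc n) r) := by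
      rw [Measure.addHaar_ball_mul_of_pos volume (0 : Spc n) hσ0 r, finrank_euclideanSpace_fin]
    have h2 : volume (Metric.ball (0 : Spc n) (σ * r)) ≤ volume (Metric.ball (0 : Spc n) r₁) :=
      measure_mono (Metric.ball_subset_ball hr₁)
    have h3 := ENNReal.toReal_mono measure_ball_lt_top.ne h2
    rw [h1, ENNReal.toReal_mul, ENNReal.toReal_ofReal (by positivity)] at h3
    exact h3
  -- measure comparison
  have hmeasineq : vQ ≤ ((N : ℝ) / σ ^ n) * vK := by
    have : ((N : ℝ) / σ ^ n) * vK = s / σ ^ n * vB₁ := by rw [hvK]; field_simp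
    rw [this, hvQ]
    rw [div_mul_eq_mul_div, le_div_iff₀ hσn]
    have := mul_le_mul_of_nonneg_left hball hs.le
    linarith only [this]
  -- MemLp setup
  set μQ := volume.restrict Q with hμQ_def
  set μK := volume.restrict QK with hμK_def
  haveI : IsFiniteMeasure μQ := ⟨by rw [hμQ_def, Measure.restrict_apply_univ]; exact hQfin⟩
  haveI : IsFiniteMeasure μK := ⟨by rw [hμK_def, Measure.restrict_apply_univ]; exact hKfin⟩
  have hle : μK ≤ μQ := Measure.restrict_mono hsub le_rfl
  set P := ENNReal.ofReal p with hP_def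
  have hP0 : P ≠ 0 := (ENNReal.ofReal_pos.mpr hp0).ne'
  have hPt : P ≠ ∞ := ENNReal.ofReal_ne_top
  have hPr : P.toReal = p := ENNReal.toReal_ofReal hp0.le
  have hu_sm : AEStronglyMeasurable u μQ := hmeas.aestronglyMeasurable
  have hMu : MemLp u P μQ := by
    have h0 : Integrable (fun z => ‖u z‖ ^ P.toReal) μQ := by
      have he : (fun z => ‖u z‖ ^ P.toReal) = fun z => u z ^ p := by
        funext z; rw [Real.norm_eq_abs, abs_of_nonneg (hu z), hPr]
      rw [he]; exact hint
    have h1 : MemLp (fun z => ‖u z‖ ^ P.toReal) 1 μQ := memLp_one_iff_integrable.mpr h0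
    have hdiv : P / P = 1 := ENNReal.div_self hP0 hPt
    exact (memLp_norm_rpow_iff hu_sm hP0 hPt).mp (hdiv ▸ h1)
  set a := ⨍ w in Q, u w with ha_def
  have ha0 : 0 ≤ a := by
    rw [ha_def, setAverage_eq, smul_eq_mul]
    exact mul_nonneg (by positivity) (integral_nonneg fun z => hu z)
  have hMc : MemLp (fun _ : SpT n => a) P μQ := memLp_const a
  have hMd : MemLp (fun z => u z - a) P μQ := hMu.sub hMc
  have hMg : MemLp (fun z => a - u z) P μQ := hMc.sub hMu
  -- integrals
  set I := ∫ z in Q, u z ^ p with hI_def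
  set J := ∫ z in Q, |u z - a| ^ p with hJ_def
  set Ik := ∫ z in QK, u z ^ p with hIk_def
  set Jk := ∫ z in QK, |u z - a| ^ p with hJk_def
  have hI0 : 0 ≤ I := integral_nonneg fun z => Real.rpow_nonneg (hu z) _
  have hJ0 : 0 ≤ J := integral_nonneg fun z => Real.rpow_nonneg (abs_nonneg _) _
  have hIk0 : 0 ≤ Ik := integral_nonneg fun z => Real.rpow_nonneg (hu z) _
  have hJk0 : 0 ≤ Jk := integral_nonneg fun z => Real.rpow_nonneg (abs_nonneg _) _
  have hJint : IntegrableOn (fun z => |u z - a| ^ p) Q := by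
    have h0 := hMd.integrable_norm_rpow hP0 hPt
    have he : (fun z => ‖u z - a‖ ^ P.toReal) = fun z => |u z - a| ^ p := by
      funext z; rw [Real.norm_eq_abs, hPr]
    rwa [he] at h0
  have hIkI : Ik ≤ I := by
    rw [hIk_def, hI_def]
    exact setIntegral_mono_set hint
      (Filter.Eventually.of_forall fun z => Real.rpow_nonneg (hu z) _) hsub.eventuallyLE
  have hJkJ : Jk ≤ J := by
    rw [hJk_def, hJ_def]
    exact setIntegral_mono_set hJint
      (Filter.Eventually.of_forall fun z => Real.rpow_nonneg (abs_nonneg _) _) hsub.eventuallyLE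
  -- rewriting averages
  have hAQ : (⨍ z in Q, u z ^ p) = vQ⁻¹ * I := by rw [setAverage_eq, smul_eq_mul]; rfl
  have hBQ : (⨍ z in Q, |u z - a| ^ p) = vQ⁻¹ * J := by rw [setAverage_eq, smul_eq_mul]; rfl
  have hAK : (⨍ z in QK, u z ^ p) = vK⁻¹ * Ik := by rw [setAverage_eq, smul_eq_mul]; rfl
  set M := (vQ⁻¹ * I) ^ (1 / p) with hM_def
  set E := (vQ⁻¹ * J) ^ (1 / p) with hE_def
  set Mk := (vK⁻¹ * Ik) ^ (1 / p) with hMk_def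
  set Ek := (vK⁻¹ * Jk) ^ (1 / p) with hEk_def
  have hM0 : 0 ≤ M := Real.rpow_nonneg (by positivity) _
  have hE0 : 0 ≤ E := Real.rpow_nonneg (by positivity) _
  have hMk0 : 0 ≤ Mk := Real.rpow_nonneg (by positivity) _
  rw [hBQ, hAQ] at hnd
  -- hnd : E ≤ ε * M
  -- transfer lemma
  have hinv : vK⁻¹ ≤ ((N : ℝ) / σ ^ n) * vQ⁻¹ := by
    have h := mul_le_mul_of_nonneg_right hmeasineq
      (by positivity : (0:ℝ) ≤ vQ⁻¹ * vK⁻¹)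
    have e1 : vQ * (vQ⁻¹ * vK⁻¹) = vK⁻¹ := by field_simp
    have e2 : ((N : ℝ) / σ ^ n) * vK * (vQ⁻¹ * vK⁻¹) = ((N : ℝ) / σ ^ n) * vQ⁻¹ := by
      field_simp
    rw [e1, e2] at h
    exact h
  have transfer : ∀ X Y : ℝ, 0 ≤ X → X ≤ Y →
      (vK⁻¹ * X) ^ (1 / p) ≤ c * (vQ⁻¹ * Y) ^ (1 / p) := by
    intro X Y hX hXY
    have hY : 0 ≤ Y := le_trans hX hXY
    rw [hc_def, ← Real.mul_rpow (by positivity) (by positivity)]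
    apply Real.rpow_le_rpow (by positivity) ?_ (by positivity)
    calc vK⁻¹ * X ≤ (((N : ℝ) / σ ^ n) * vQ⁻¹) * X := mul_le_mul_of_nonneg_right hinv hX
      _ ≤ (((N : ℝ) / σ ^ n) * vQ⁻¹) * Y := by
          apply mul_le_mul_of_nonneg_left hXY (by positivity)
      _ = ((N : ℝ) / σ ^ n) * (vQ⁻¹ * Y) := by ring
  -- Step A : M ≤ a + E
  have stepA : M ≤ a + E := by
    have mink := rpow_integral_minkowski' (μ := μQ) hp1 hMd hMc
    have e1 : (fun x => |(fun z => u z - a) x + (fun _ : SpT n => a) x| ^ p)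
        = fun x => u x ^ p := by
      funext x; simp only [sub_add_cancel, abs_of_nonneg (hu x)]
    have e2 : (fun x => |(fun z => u z - a) x| ^ p) = fun x => |u x - a| ^ p := by
      funext x; rfl
    have e3 : (∫ x, |(fun _ : SpT n => a) x| ^ p ∂μQ) = vQ * a ^ p := by
      rw [integral_const, smul_eq_mul, measureReal_restrict_apply_univ, measureReal_def, abs_of_nonneg ha0]
    rw [e1, e2, e3] at mink
    -- mink : I ^ (1/p) ≤ J ^ (1/p) + (vQ * a^p)^(1/p)
    have hmul := mul_le_mul_of_nonneg_left mink
      (Real.rpow_nonneg (inv_nonneg.mpr hvQpos.le) (1 / p) : 0 ≤ (vQ⁻¹) ^ (1 / p))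
    rw [mul_add, ← Real.mul_rpow (by positivity) hI0, ← Real.mul_rpow (by positivity) hJ0,
      ← Real.mul_rpow (by positivity) (by positivity)] at hmul
    have e4 : vQ⁻¹ * (vQ * a ^ p) = a ^ p := by field_simp
    rw [e4] at hmul
    have e5 : (a ^ p) ^ (1 / p) = a := by
      rw [one_div, ← Real.rpow_mul ha0, mul_inv_cancel₀ hp0.ne', Real.rpow_one]
    rw [e5] at hmul
    rw [hM_def, hE_def]
    linarith only [hmul]
  -- Step B : a ≤ Mk + Ek
  have stepB : a ≤ Mk + Ek := by
    have hMuK : MemLp u P μK := hMu.mono_measure hle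
    have hMgK : MemLp (fun z => a - u z) P μK := hMg.mono_measure hle
    have mink := rpow_integral_minkowski' (μ := μK) hp1 hMuK hMgK
    have e1 : (fun x => |u x + (fun z => a - u z) x| ^ p) = fun _ : SpT n => a ^ p := by
      funext x
      simp only []
      rw [show u x + (a - u x) = a by ring, abs_of_nonneg ha0]
    have e2 : (fun x => |u x| ^ p) = fun x => u x ^ p := by
      funext x; rw [abs_of_nonneg (hu x)]
    have e3 : (fun x => |(fun z => a - u z) x| ^ p) = fun x => |u x - a| ^ p := by
      funext x; simp only []; rw [abs_sub_comm]
    rw [e1, e2, e3, integral_const, smul_eq_mul, measureReal_restrict_apply_univ, measureReal_def] at mink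
    -- mink : (vK * a^p)^(1/p) ≤ Ik^(1/p) + Jk^(1/p)
    have hmul := mul_le_mul_of_nonneg_left mink
      (Real.rpow_nonneg (inv_nonneg.mpr hvKpos.le) (1 / p) : 0 ≤ (vK⁻¹) ^ (1 / p))
    rw [mul_add, ← Real.mul_rpow (by positivity) hIk0, ← Real.mul_rpow (by positivity) hJk0,
      ← Real.mul_rpow (by positivity) (by positivity)] at hmul
    have e4 : vK⁻¹ * (vK * a ^ p) = a ^ p := by field_simp
    rw [e4] at hmul
    have e5 : (a ^ p) ^ (1 / p) = a := by
      rw [one_div, ← Real.rpow_mul ha0, mul_inv_cancel₀ hp0.ne', Real.rpow_one]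
    rw [e5] at hmul
    exact hmul
  have hEk : Ek ≤ c * E := transfer Jk J hJk0 hJkJ
  have hMkcM : Mk ≤ c * M := transfer Ik I hIk0 hIkI
  -- combine
  have hchain : M ≤ Mk + c * (ε * M) + ε * M := by
    have h1 : Ek ≤ c * (ε * M) := le_trans hEk (mul_le_mul_of_nonneg_left hnd hc0)
    linarith only [stepA, stepB, hnd, h1]
  set D := 1 - (c + 1) * ε with hD_def
  have hc1 : 0 < c + 1 := by linarith
  have hD : 0 < D := by
    rw [hD_def]
    have : (c + 1) * ε < (c + 1) * (1 / (c + 1)) := mul_lt_mul_of_pos_left hε hc1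
    rw [mul_one_div, div_self hc1.ne'] at this
    linarith only [this]
  have hDM : D * M ≤ Mk := by
    have he : D * M = M - (c * (ε * M) + ε * M) := by rw [hD_def]; ring
    rw [he]
    linarith only [hchain]
  rw [hAQ, hAK]
  constructor
  · rw [← hM_def, ← hMk_def]
    calc M = D⁻¹ * (D * M) := by field_simp
      _ ≤ D⁻¹ * Mk := mul_le_mul_of_nonneg_left hDM (inv_nonneg.mpr hD.le)
  · rw [← hM_def, ← hMk_def]
    calc D⁻¹ * Mk ≤ D⁻¹ * (c * M) := mul_le_mul_of_nonneg_left hMkcM (inv_nonneg.mpr hD.le)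
      _ = c * D⁻¹ * M := by ring
end
end

section
/- Let m > 1, θ, ρ > 0, Q = Q_{2θρ²,2ρ} = (−2θρ², 0] × B_{2ρ}, and let u ∈ L^{m+1}(Q) be nonnegative. For every α, γ ∈ (0,1) there exists ε ∈ (0, 1/2) such that, if ( ⨍⨍_Q |u − (u)_Q|^{m+1} dx dt )^{1/(m+1)} ≤ ε ( ⨍⨍_Q u^{m+1} dx dt )^{1/(m+1)}, then: (i) (u)_Q ≥ (1−ε) ( ⨍⨍_Q u^{m+1} )^{1/(m+1)}; (ii) (u)_Q ≤ ((1−ε)/γ) ⨍⨍_Q u · χ_{{u ≥ α (u)_Q}} dx dt; (iii) |Q ∩ {u ≥ α (u)_Q}| ≥ γ^{(m+1)/m} |Q|. -/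
open MeasureTheory Set
open scoped ENNReal RealInnerProductSpace

noncomputable section

variable {n : ℕ}

private lemma aux_memLp {X : Type*} [MeasurableSpace X] {μ : Measure X} {f : X → ℝ} {r : ℝ}
    (hr : 0 < r) (hf : AEStronglyMeasurable f μ)
    (hi : Integrable (fun x => |f x| ^ r) μ) : MemLp f (ENNReal.ofReal r) μ := by
  have h1 : ENNReal.ofReal r ≠ 0 := by
    simpa [ENNReal.ofReal_eq_zero, not_le] using hr
  have h2 : ENNReal.ofReal r ≠ ⊤ := ENNReal.ofReal_ne_top
  rw [← memLp_norm_rpow_iff hf h1 h2, ENNReal.div_self h1 h2, memLp_one_iff_integrable]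
  refine hi.congr ?_
  filter_upwards with x
  rw [ENNReal.toReal_ofReal hr.le, Real.norm_eq_abs]

private lemma holder_pair {X : Type*} [MeasurableSpace X] {μ : Measure X} {m : ℝ} (hm : 1 < m)
    {f g : X → ℝ} (hf0 : ∀ x, 0 ≤ f x) (hg0 : ∀ x, 0 ≤ g x)
    (hf : MemLp f (ENNReal.ofReal (m + 1)) μ) (hg : MemLp g (ENNReal.ofReal ((m + 1) / m)) μ) :
    ∫ x, f x * g x ∂μ ≤
      (∫ x, f x ^ (m + 1) ∂μ) ^ (1 / (m + 1)) * (∫ x, g x ^ ((m + 1) / m) ∂μ) ^ (m / (m + 1)) := by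
  have hm0 : (0:ℝ) < m := by linarith
  have hpq : (m + 1).HolderConjugate ((m + 1) / m) :=
    (Real.holderConjugate_iff_eq_conjExponent (by linarith)).mpr (by rw [add_sub_cancel_right])
  have h := integral_mul_le_Lp_mul_Lq_of_nonneg hpq (ae_of_all _ hf0) (ae_of_all _ hg0) hf hg
  have he : 1 / ((m + 1) / m) = m / (m + 1) := by field_simp
  rwa [he] at h

set_option maxHeartbeats 1000000 in
private lemma nondeg_core {X : Type*} [MeasurableSpace X] {P : Measure X}
    [IsProbabilityMeasure P]
    {m α γ ε : ℝ} (hm : 1 < m) (hα0 : 0 < α) (hα1 : α < 1) (hγ0 : 0 < γ) (hγ1 : γ < 1)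
    (hε_def : ε = (1 - α) * (1 - γ) / 8)
    {u : X → ℝ} (hu0 : ∀ z, 0 ≤ u z) (humeas : Measurable u)
    (huA : Integrable (fun z => u z ^ (m + 1)) P)
    (hyp : (∫ z, |u z - ∫ w, u w ∂P| ^ (m + 1) ∂P) ^ (1 / (m + 1))
      ≤ ε * (∫ z, u z ^ (m + 1) ∂P) ^ (1 / (m + 1))) :
    ((1 - ε) * (∫ z, u z ^ (m + 1) ∂P) ^ (1 / (m + 1)) ≤ ∫ z, u z ∂P)
    ∧ ((∫ z, u z ∂P)
        ≤ (1 - ε) / γ * ∫ z, (if α * (∫ w, u w ∂P) ≤ u z then u z else 0) ∂P)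
    ∧ (γ ^ ((m + 1) / m) ≤ (P {z | α * (∫ w, u w ∂P) ≤ u z}).toReal) := by
  have hm0 : (0:ℝ) < m := by linarith
  have hm1 : (0:ℝ) < m + 1 := by linarith
  have hε0 : 0 < ε := by rw [hε_def]; nlinarith
  have hε8 : ε ≤ (1 - γ) / 8 := by rw [hε_def]; nlinarith
  have hεh : ε < 1 / 2 := by nlinarith
  have hεlt1 : (0:ℝ) < 1 - ε := by linarith
  set M : ℝ := ∫ z, u z ∂P with hM_def
  set A : ℝ := ∫ z, u z ^ (m + 1) ∂P with hA_def
  set I : ℝ := A ^ (1 / (m + 1)) with hI_def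
  have hA0 : 0 ≤ A := integral_nonneg fun z => Real.rpow_nonneg (hu0 z) _
  have hI0 : 0 ≤ I := Real.rpow_nonneg hA0 _
  have hM0 : 0 ≤ M := integral_nonneg hu0
  have huInt : Integrable u P := by
    refine Integrable.mono' ((integrable_const (1:ℝ)).add huA) humeas.aestronglyMeasurable ?_
    filter_upwards with z
    rw [Real.norm_eq_abs, abs_of_nonneg (hu0 z)]
    simp only [Pi.add_apply]
    rcases le_or_gt (u z) 1 with h | h
    · have := Real.rpow_nonneg (hu0 z) (m + 1); linarith
    · have h1 : u z ^ (1:ℝ) ≤ u z ^ (m + 1) :=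
        Real.rpow_le_rpow_of_exponent_le h.le (by linarith)
      rw [Real.rpow_one] at h1; linarith
  have humea : AEStronglyMeasurable u P := humeas.aestronglyMeasurable
  have hup : MemLp u (ENNReal.ofReal (m + 1)) P := by
    refine aux_memLp hm1 humea (huA.congr ?_)
    filter_upwards with z
    rw [abs_of_nonneg (hu0 z)]
  have hqval : (0:ℝ) < (m + 1) / m := by positivity
  have hum_eq_pt : ∀ z, u z ^ (m + 1) = (u z ^ m) ^ ((m + 1) / m) := by
    intro z
    rw [← Real.rpow_mul (hu0 z)]
    congr 1
    field_simp
  have humem : MemLp (fun z => u z ^ m) (ENNReal.ofReal ((m + 1) / m)) P := by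
    refine aux_memLp hqval
      (((Real.continuous_rpow_const hm0.le).measurable.comp humeas).aestronglyMeasurable)
      (huA.congr ?_)
    filter_upwards with z
    rw [abs_of_nonneg (Real.rpow_nonneg (hu0 z) m)]
    exact hum_eq_pt z
  have hsub : MemLp (fun z => u z - M) (ENNReal.ofReal (m + 1)) P := hup.sub (memLp_const M)
  have habs : MemLp (fun z => |u z - M|) (ENNReal.ofReal (m + 1)) P := hsub.abs
  have hfabs_int : Integrable (fun z => |u z - M| ^ (m + 1)) P := by
    have h := hsub.norm_rpow (by simpa [ENNReal.ofReal_eq_zero, not_le] using hm1)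
      ENNReal.ofReal_ne_top
    rw [memLp_one_iff_integrable] at h
    refine h.congr ?_
    filter_upwards with z
    rw [Real.norm_eq_abs, ENNReal.toReal_ofReal hm1.le]
  have hum_eq : ∫ z, (u z ^ m) ^ ((m + 1) / m) ∂P = A := by
    rw [hA_def]
    exact (integral_congr_ae (ae_of_all _ fun z => (hum_eq_pt z).symm))
  have hIm : A ^ (m / (m + 1)) = I ^ m := by
    rw [hI_def, ← Real.rpow_mul hA0]
    congr 1
    field_simp
  have hK1 : ∫ z, u z ^ m ∂P ≤ I ^ m := by
    have h := holder_pair hm (fun _ : X => zero_le_one)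
      (fun z => Real.rpow_nonneg (hu0 z) m) (memLp_const (μ := P) 1) humem
    have h' : ∫ z, 1 * u z ^ m ∂P ≤
        (∫ z, (1:ℝ) ^ (m + 1) ∂P) ^ (1 / (m + 1)) *
          (∫ z, (u z ^ m) ^ ((m + 1) / m) ∂P) ^ (m / (m + 1)) := h
    have h1 : ∫ z, (1:ℝ) ^ (m + 1) ∂P = 1 := by simp
    rw [h1, Real.one_rpow, one_mul, hum_eq, hIm] at h'
    simpa using h'
  have hK2 : ∫ z, |u z - M| * u z ^ m ∂P ≤ (ε * I) * I ^ m := by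
    have h := holder_pair hm (fun z : X => abs_nonneg (u z - M))
      (fun z => Real.rpow_nonneg (hu0 z) m) habs humem
    have h' : ∫ z, |u z - M| * u z ^ m ∂P ≤
        (∫ z, |u z - M| ^ (m + 1) ∂P) ^ (1 / (m + 1)) *
          (∫ z, (u z ^ m) ^ ((m + 1) / m) ∂P) ^ (m / (m + 1)) := h
    rw [hum_eq, hIm] at h'
    refine h'.trans ?_
    exact mul_le_mul_of_nonneg_right hyp (Real.rpow_nonneg hI0 m)
  have humInt : Integrable (fun z => u z ^ m) P :=
    humem.integrable (ENNReal.one_le_ofReal.mpr (by rw [le_div_iff₀ hm0]; linarith))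
  have hupow : ∀ z, u z ^ (m + 1) = u z * u z ^ m := by
    intro z
    rw [show m + 1 = 1 + m by ring, Real.rpow_add' (hu0 z) (by linarith), Real.rpow_one]
  have huum : Integrable (fun z => u z * u z ^ m) P :=
    huA.congr (ae_of_all _ fun z => hupow z)
  have hMum : Integrable (fun z => M * u z ^ m) P := humInt.const_mul M
  have hpq : (m + 1).HolderConjugate ((m + 1) / m) :=
    (Real.holderConjugate_iff_eq_conjExponent (by linarith)).mpr (by rw [add_sub_cancel_right])
  have humq_int : Integrable (fun z => (u z ^ m) ^ ((m + 1) / m)) P :=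
    huA.congr (ae_of_all _ fun z => hum_eq_pt z)
  have hprod_int : Integrable (fun z => |u z - M| * u z ^ m) P := by
    refine Integrable.mono'
      (g := fun z => |u z - M| ^ (m + 1) / (m + 1) + (u z ^ m) ^ ((m + 1) / m) / ((m + 1) / m))
      ((hfabs_int.div_const _).add (humq_int.div_const _))
      (((humeas.sub measurable_const).abs.mul
        ((Real.continuous_rpow_const hm0.le).measurable.comp humeas)).aestronglyMeasurable) ?_
    filter_upwards with z
    rw [Real.norm_eq_abs, abs_of_nonneg (mul_nonneg (abs_nonneg _) (Real.rpow_nonneg (hu0 z) m))]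
    have h := Real.young_inequality (|u z - M|) (u z ^ m) hpq
    rwa [abs_abs, abs_of_nonneg (Real.rpow_nonneg (hu0 z) m)] at h
  have hsplit : A - M * ∫ z, u z ^ m ∂P ≤ ε * I * I ^ m := by
    have e1 : A - M * ∫ z, u z ^ m ∂P = ∫ z, (u z * u z ^ m - M * u z ^ m) ∂P := by
      rw [integral_sub huum hMum, integral_const_mul]
      congr 1
      rw [hA_def]
      exact integral_congr_ae (ae_of_all _ fun z => hupow z)
    rw [e1]
    refine le_trans (integral_mono_ae (huum.sub hMum) hprod_int (ae_of_all _ fun z => ?_)) hK2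
    show u z * u z ^ m - M * u z ^ m ≤ |u z - M| * u z ^ m
    nlinarith [mul_le_mul_of_nonneg_right (le_abs_self (u z - M)) (Real.rpow_nonneg (hu0 z) m)]
  rcases eq_or_lt_of_le hA0 with hAz | hApos
  · -- degenerate case : A = 0
    have hu_zero : u =ᵐ[P] 0 := by
      have h1 : (fun z => u z ^ (m + 1)) =ᵐ[P] 0 :=
        (integral_eq_zero_iff_of_nonneg (fun z => Real.rpow_nonneg (hu0 z) _) huA).mp hAz.symm
      filter_upwards [h1] with z hz
      simp only [Pi.zero_apply] at hz ⊢
      by_contra hne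
      have hpos : 0 < u z := lt_of_le_of_ne (hu0 z) (Ne.symm hne)
      exact absurd hz (ne_of_gt (Real.rpow_pos_of_pos hpos _))
    have hMzero : M = 0 := by
      rw [hM_def, integral_congr_ae hu_zero]
      simp
    have hIzero : I = 0 := by
      rw [hI_def, ← hAz, Real.zero_rpow (ne_of_gt (by positivity))]
    refine ⟨by rw [hIzero]; simpa using hM0, ?_, ?_⟩
    · rw [hMzero]
      have h1 : 0 ≤ ∫ z, (if α * (0:ℝ) ≤ u z then u z else 0) ∂P := by
        refine integral_nonneg fun z => ?_
        split_ifs with hz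
        · exact hu0 z
        · exact le_rfl
      have h2 : (0:ℝ) ≤ (1 - ε) / γ := by positivity
      exact mul_nonneg h2 h1
    · have hset : {z | α * M ≤ u z} = Set.univ := by
        ext z
        simp only [mem_setOf_eq, mem_univ, iff_true, hMzero, mul_zero]
        exact hu0 z
      rw [hset]
      simp only [measure_univ, ENNReal.toReal_one]
      exact Real.rpow_le_one hγ0.le hγ1.le (by positivity)
  · -- main case : 0 < A
    have hIpos : 0 < I := Real.rpow_pos_of_pos hApos _
    have hImpos : 0 < I ^ m := Real.rpow_pos_of_pos hIpos m
    have hAI : A = I * I ^ m := by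
      rw [hI_def, ← Real.rpow_mul hA0, ← Real.rpow_add hApos,
        show 1 / (m + 1) + 1 / (m + 1) * m = 1 by field_simp; ring, Real.rpow_one]
    have hi : (1 - ε) * I ≤ M := by
      have h2 : M * ∫ z, u z ^ m ∂P ≤ M * I ^ m := mul_le_mul_of_nonneg_left hK1 hM0
      rw [hAI] at hsplit
      have h4 : ((1 - ε) * I) * I ^ m ≤ M * I ^ m := by linarith [hsplit, h2]
      exact le_of_mul_le_mul_right h4 hImpos
    have hMpos : 0 < M := lt_of_lt_of_le (by positivity) hi
    set K : ℝ := ((1 - α) * M) ^ (m + 1) with hK_def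
    have hK0 : 0 < K := Real.rpow_pos_of_pos (mul_pos (by linarith) hMpos) _
    have hmar := mul_meas_ge_le_integral_of_nonneg (μ := P)
      (ae_of_all _ fun z => Real.rpow_nonneg (abs_nonneg (u z - M)) (m + 1)) hfabs_int K
    have hB : ∫ z, |u z - M| ^ (m + 1) ∂P ≤ (ε * I) ^ (m + 1) := by
      have h0 : 0 ≤ ∫ z, |u z - M| ^ (m + 1) ∂P :=
        integral_nonneg fun z => Real.rpow_nonneg (abs_nonneg _) _
      have h1 := Real.rpow_le_rpow (Real.rpow_nonneg h0 _) hyp (by linarith : (0:ℝ) ≤ m + 1)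
      rwa [← Real.rpow_mul h0, one_div,
        inv_mul_cancel₀ (by linarith : (m:ℝ) + 1 ≠ 0), Real.rpow_one] at h1
    set r : ℝ := ε / ((1 - α) * (1 - ε)) with hr_def
    have hr0 : 0 < r := by
      rw [hr_def]; exact div_pos hε0 (by nlinarith)
    have hr_le : r ≤ (1 - γ) / 4 := by
      rw [hr_def, div_le_div_iff₀ (by nlinarith) (by norm_num)]
      have h8 : (1 - γ) * ((1 - α) * (1 - ε)) = 8 * ε * (1 - ε) := by rw [hε_def]; ring
      rw [h8]
      nlinarith [mul_nonneg hε0.le (by linarith : (0:ℝ) ≤ 1 - 2 * ε)]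
    have hr1 : r ≤ 1 := le_trans hr_le (by linarith)
    have hrm : r ^ m ≤ r := by
      have h := Real.rpow_le_rpow_of_exponent_ge hr0 hr1 hm.le
      rwa [Real.rpow_one] at h
    have hrm0 : 0 ≤ r ^ m := Real.rpow_nonneg hr0.le m
    have hσ : (P {z | K ≤ |u z - M| ^ (m + 1)}).toReal ≤ r ^ (m + 1) := by
      have h1 : ε * I ≤ r * ((1 - α) * M) := by
        have e : r * ((1 - α) * M) = ε * (M / (1 - ε)) := by
          have h1 : (1 - α) ≠ 0 := by linarith
          have h2 : (1 - ε) ≠ 0 := by linarith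
          rw [hr_def]
          field_simp
        rw [e]
        refine mul_le_mul_of_nonneg_left ?_ hε0.le
        rw [le_div_iff₀ hεlt1]
        linarith [hi]
      have h2 : (ε * I) ^ (m + 1) ≤ r ^ (m + 1) * K := by
        rw [hK_def, ← Real.mul_rpow hr0.le (mul_nonneg (by linarith) hM0)]
        exact Real.rpow_le_rpow (by positivity) h1 (by linarith)
      have h3 : K * (P {z | K ≤ |u z - M| ^ (m + 1)}).toReal ≤ K * r ^ (m + 1) := by
        refine le_trans (le_trans hmar hB) ?_
        linarith [h2]
      exact le_of_mul_le_mul_left h3 hK0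
    set S : Set X := {z | α * M ≤ u z} with hS_def
    have hSmeas : MeasurableSet S := measurableSet_le measurable_const humeas
    set S' : Set X := {z | u z < α * M} with hS'_def
    have hS'meas : MeasurableSet S' := measurableSet_lt humeas measurable_const
    have hind_pow : ∀ (W : Set X), MeasurableSet W →
        ∫ z, (W.indicator (fun _ => (1:ℝ)) z) ^ ((m + 1) / m) ∂P = (P W).toReal := by
      intro W hW
      rw [← measureReal_def, ← integral_indicator_one hW]
      refine integral_congr_ae (ae_of_all _ fun z => ?_)
      by_cases hz : z ∈ W
      · simp [hz, Real.one_rpow]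
      · simp [hz, Real.zero_rpow (ne_of_gt hqval)]
    have hindmem : ∀ (W : Set X), MeasurableSet W →
        MemLp (W.indicator (fun _ => (1:ℝ))) (ENNReal.ofReal ((m + 1) / m)) P :=
      fun W hW => MemLp.indicator hW (memLp_const 1)
    have hholder_ind : ∀ (W : Set X), MeasurableSet W →
        ∫ z, u z * W.indicator (fun _ => (1:ℝ)) z ∂P ≤ I * ((P W).toReal) ^ (m / (m + 1)) := by
      intro W hW
      have h := holder_pair hm hu0
        (fun z => Set.indicator_nonneg (fun _ _ => zero_le_one) z) hup (hindmem W hW)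
      have h' : ∫ z, u z * W.indicator (fun _ => (1:ℝ)) z ∂P ≤
          (∫ z, u z ^ (m + 1) ∂P) ^ (1 / (m + 1)) *
            (∫ z, (W.indicator (fun _ => (1:ℝ)) z) ^ ((m + 1) / m) ∂P) ^ (m / (m + 1)) := h
      rwa [hind_pow W hW, ← hA_def, ← hI_def] at h'
    have hS'sub : S' ⊆ {z | K ≤ |u z - M| ^ (m + 1)} := by
      intro z hz
      rw [hS'_def] at hz
      have hz' : u z < α * M := hz
      simp only [mem_setOf_eq]
      rw [hK_def]
      refine Real.rpow_le_rpow (mul_nonneg (by linarith) hM0) ?_ (by linarith)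
      have hαM : α * M ≤ M := by nlinarith [hMpos]
      rw [abs_sub_comm, abs_of_nonneg (by linarith : (0:ℝ) ≤ M - u z)]
      linarith
    have hPS' : (P S').toReal ≤ r ^ (m + 1) :=
      le_trans (ENNReal.toReal_mono (measure_ne_top P _) (measure_mono hS'sub)) hσ
    have hpow_bound : ((P S').toReal) ^ (m / (m + 1)) ≤ r ^ m := by
      have h := Real.rpow_le_rpow ENNReal.toReal_nonneg hPS' (by positivity : (0:ℝ) ≤ m / (m + 1))
      rwa [← Real.rpow_mul hr0.le, show (m + 1) * (m / (m + 1)) = m by field_simp] at h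
    have hint_uχ : ∀ (W : Set X), MeasurableSet W →
        Integrable (fun z => u z * W.indicator (fun _ => (1:ℝ)) z) P := by
      intro W hW
      refine huInt.mono' ((humeas.mul (measurable_one.indicator hW)).aestronglyMeasurable) ?_
      filter_upwards with z
      rw [Real.norm_eq_abs, abs_mul, abs_of_nonneg (hu0 z)]
      have hχ : |W.indicator (fun _ => (1:ℝ)) z| ≤ 1 := by
        by_cases hz : z ∈ W <;> simp [hz]
      calc u z * |W.indicator (fun _ => (1:ℝ)) z| ≤ u z * 1 :=
            mul_le_mul_of_nonneg_left hχ (hu0 z)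
        _ = u z := mul_one _
    have hsum : ∫ z, u z * S.indicator (fun _ => (1:ℝ)) z ∂P
        + ∫ z, u z * S'.indicator (fun _ => (1:ℝ)) z ∂P = M := by
      rw [← integral_add (hint_uχ S hSmeas) (hint_uχ S' hS'meas), hM_def]
      refine integral_congr_ae (ae_of_all _ fun z => ?_)
      by_cases hz : α * M ≤ u z
      · have h1 : z ∈ S := by rw [hS_def]; exact hz
        have h2 : z ∉ S' := by rw [hS'_def]; simp only [mem_setOf_eq, not_lt]; exact hz
        simp [Set.indicator_of_mem h1, Set.indicator_of_notMem h2]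
      · have h1 : z ∉ S := by rw [hS_def]; simpa using hz
        have h2 : z ∈ S' := by rw [hS'_def]; exact mem_setOf_eq ▸ lt_of_not_ge hz
        simp [Set.indicator_of_mem h2, Set.indicator_of_notMem h1]
    have hkey : γ * M ≤ (1 - ε) * ∫ z, u z * S.indicator (fun _ => (1:ℝ)) z ∂P := by
      have hb1 : ∫ z, u z * S'.indicator (fun _ => (1:ℝ)) z ∂P ≤ I * r ^ m :=
        le_trans (hholder_ind S' hS'meas) (mul_le_mul_of_nonneg_left hpow_bound hI0)
      have hb2 : (1 - ε) * (I * r ^ m) ≤ M * r ^ m := by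
        rw [← mul_assoc]
        exact mul_le_mul_of_nonneg_right hi hrm0
      have hb3 : r ^ m ≤ 1 - ε - γ := by linarith [hrm, hε8, hr_le]
      have hb4 := mul_le_mul_of_nonneg_left hb1 hεlt1.le
      have hb5 := mul_le_mul_of_nonneg_left hb3 hM0
      have hX : ∫ z, u z * S.indicator (fun _ => (1:ℝ)) z ∂P
          = M - ∫ z, u z * S'.indicator (fun _ => (1:ℝ)) z ∂P := by linarith [hsum]
      have hYb := le_trans hb4 (le_trans hb2 hb5)
      rw [hX]
      linarith [hYb]
    refine ⟨hi, ?_, ?_⟩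
    · -- (ii)
      have hif : ∫ z, (if α * M ≤ u z then u z else 0) ∂P
          = ∫ z, u z * S.indicator (fun _ => (1:ℝ)) z ∂P := by
        refine integral_congr_ae (ae_of_all _ fun z => ?_)
        show (if α * M ≤ u z then u z else 0) = u z * S.indicator (fun _ => (1:ℝ)) z
        by_cases hz : α * M ≤ u z
        · rw [if_pos hz, Set.indicator_of_mem (by rw [hS_def]; exact hz), mul_one]
        · rw [if_neg hz, Set.indicator_of_notMem (by rw [hS_def]; simpa using hz), mul_zero]
      rw [hif, div_mul_eq_mul_div, le_div_iff₀ hγ0]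
      linarith [hkey]
    · -- (iii)
      have hH := hholder_ind S hSmeas
      have ht0 : (0:ℝ) ≤ ((P S).toReal) ^ (m / (m + 1)) :=
        Real.rpow_nonneg ENNReal.toReal_nonneg _
      have hγle : γ ≤ ((P S).toReal) ^ (m / (m + 1)) := by
        have h1 : γ * M ≤ (1 - ε) * (I * ((P S).toReal) ^ (m / (m + 1))) :=
          le_trans hkey (mul_le_mul_of_nonneg_left hH hεlt1.le)
        have h2 : (1 - ε) * (I * ((P S).toReal) ^ (m / (m + 1)))
            ≤ M * ((P S).toReal) ^ (m / (m + 1)) := by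
          rw [← mul_assoc]
          exact mul_le_mul_of_nonneg_right hi ht0
        refine le_of_mul_le_mul_right ?_ hMpos
        calc γ * M ≤ M * ((P S).toReal) ^ (m / (m + 1)) := le_trans h1 h2
          _ = ((P S).toReal) ^ (m / (m + 1)) * M := mul_comm _ _
      have h := Real.rpow_le_rpow hγ0.le hγle (le_of_lt hqval)
      rwa [← Real.rpow_mul ENNReal.toReal_nonneg,
        show (m / (m + 1)) * ((m + 1) / m) = 1 by field_simp, Real.rpow_one] at h

/-- **Lemma 4.6 (Consequences of the non-degenerate condition).**
Let `m > 1`, `θ, ρ > 0`, `Q = Q_{2θρ²,2ρ}`, and `u ∈ L^{m+1}(Q)` nonnegative. For every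
`α, γ ∈ (0,1)` there exists `ε ∈ (0,1/2)` such that, if the non-degenerate condition holds
with this `ε`, then (i) `(u)_Q ≥ (1−ε)(⨍⨍ u^{m+1})^{1/(m+1)}`,
(ii) `(u)_Q ≤ ((1−ε)/γ) ⨍⨍ u χ_{{u ≥ α(u)_Q}}`, and
(iii) `|Q ∩ {u ≥ α(u)_Q}| ≥ γ^{(m+1)/m} |Q|`. -/
theorem nondegenerate_consequences
    (n : ℕ) (m : ℝ) (hm : 1 < m) (α γ : ℝ)
    (hα : α ∈ Set.Ioo (0 : ℝ) 1) (hγ : γ ∈ Set.Ioo (0 : ℝ) 1) :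
    ∃ ε : ℝ, ε ∈ Set.Ioo (0 : ℝ) (1 / 2) ∧
      ∀ (θ ρ : ℝ) (u : SpT n → ℝ),
        0 < θ → 0 < ρ → (∀ z, 0 ≤ u z) → Measurable u →
        IntegrableOn (fun z => u z ^ (m + 1)) (cylQ (0 : SpT n) (2 * θ * ρ ^ 2) (2 * ρ)) →
        ∀ Q : Set (SpT n), Q = cylQ (0 : SpT n) (2 * θ * ρ ^ 2) (2 * ρ) →
        (⨍ z in Q, |u z - ⨍ w in Q, u w| ^ (m + 1)) ^ (1 / (m + 1))
          ≤ ε * (⨍ z in Q, u z ^ (m + 1)) ^ (1 / (m + 1)) →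
        ((1 - ε) * (⨍ z in Q, u z ^ (m + 1)) ^ (1 / (m + 1)) ≤ ⨍ z in Q, u z)
        ∧ ((⨍ z in Q, u z)
            ≤ (1 - ε) / γ *
              ⨍ z in Q, (if α * (⨍ w in Q, u w) ≤ u z then u z else 0))
        ∧ (γ ^ ((m + 1) / m) * (volume Q).toReal
            ≤ (volume (Q ∩ {z | α * (⨍ w in Q, u w) ≤ u z})).toReal) := by
  rw [Set.mem_Ioo] at hα hγ
  obtain ⟨hα0, hα1⟩ := hα
  obtain ⟨hγ0, hγ1⟩ := hγ
  refine ⟨(1 - α) * (1 - γ) / 8,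
    Set.mem_Ioo.mpr ⟨by nlinarith, by nlinarith⟩, ?_⟩
  intro θ ρ u hθ hρ hu0 humeas huint Q hQ hyp
  subst hQ
  set Qs : Set (SpT n) := cylQ (0 : SpT n) (2 * θ * ρ ^ 2) (2 * ρ) with hQs_def
  have hQeq : Qs = Set.Ioc (-(2 * θ * ρ ^ 2)) 0 ×ˢ Metric.ball (0 : Spc n) (2 * ρ) := by
    simp [hQs_def, cylQ]
  have hvol : volume Qs
      = ENNReal.ofReal (2 * θ * ρ ^ 2) * volume (Metric.ball (0 : Spc n) (2 * ρ)) := by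
    rw [hQeq, Measure.volume_eq_prod, Measure.prod_prod, Real.volume_Ioc]
    norm_num
  have hball0 : volume (Metric.ball (0 : Spc n) (2 * ρ)) ≠ 0 :=
    (Metric.measure_ball_pos _ _ (by positivity)).ne'
  have hballt : volume (Metric.ball (0 : Spc n) (2 * ρ)) ≠ ⊤ := measure_ball_lt_top.ne
  have hv0 : volume Qs ≠ 0 := by
    rw [hvol]
    refine mul_ne_zero ?_ hball0
    simp only [ne_eq, ENNReal.ofReal_eq_zero, not_le]
    positivity
  have hvt : volume Qs ≠ ⊤ := by
    rw [hvol]; exact ENNReal.mul_ne_top ENNReal.ofReal_ne_top hballt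
  have hc0 : 0 < (volume Qs).toReal := ENNReal.toReal_pos hv0 hvt
  set P : Measure (SpT n) := (volume Qs)⁻¹ • volume.restrict Qs with hP_def
  haveI hPprob : IsProbabilityMeasure P := by
    constructor
    rw [hP_def, Measure.smul_apply, Measure.restrict_apply_univ, smul_eq_mul,
      ENNReal.inv_mul_cancel hv0 hvt]
  have havg : ∀ f : SpT n → ℝ, (⨍ z in Qs, f z) = ∫ z, f z ∂P := by
    intro f
    rw [hP_def, integral_smul_measure, setAverage_eq, ENNReal.toReal_inv, smul_eq_mul, measureReal_def, smul_eq_mul]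
  have huintP : Integrable (fun z => u z ^ (m + 1)) P := by
    rw [hP_def]
    refine (integrable_smul_measure ?_ ?_).mpr huint
    · simp [hvt]
    · simp [hv0]
  simp only [havg] at hyp ⊢
  have hcore := nondeg_core (P := P) hm hα0 hα1 hγ0 hγ1 rfl hu0 humeas huintP hyp
  refine ⟨hcore.1, hcore.2.1, ?_⟩
  have hfinal := hcore.2.2
  have hSmeas : MeasurableSet {z : SpT n | α * (∫ w, u w ∂P) ≤ u z} :=
    measurableSet_le measurable_const humeas
  have hPS : (P {z : SpT n | α * (∫ w, u w ∂P) ≤ u z}).toReal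
      = (volume Qs).toReal⁻¹
        * (volume (Qs ∩ {z : SpT n | α * (∫ w, u w ∂P) ≤ u z})).toReal := by
    rw [hP_def, Measure.smul_apply, Measure.restrict_apply hSmeas, smul_eq_mul,
      ENNReal.toReal_mul, ENNReal.toReal_inv,
      Set.inter_comm {z : SpT n | α * (∫ w, u w ∂P) ≤ u z} Qs]
  rw [hPS] at hfinal
  have hmul := mul_le_mul_of_nonneg_right hfinal hc0.le
  calc γ ^ ((m + 1) / m) * (volume Qs).toReal
      ≤ ((volume Qs).toReal⁻¹
          * (volume (Qs ∩ {z : SpT n | α * (∫ w, u w ∂P) ≤ u z})).toReal)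
        * (volume Qs).toReal := hmul
    _ = (volume (Qs ∩ {z : SpT n | α * (∫ w, u w ∂P) ≤ u z})).toReal := by
        rw [mul_comm ((volume Qs).toReal⁻¹) _, mul_assoc,
          inv_mul_cancel₀ hc0.ne', mul_one]
end
end

section
/- Let Ω ⊂ ℝ^M, R > 0, and let {U(x,r) : x ∈ Ω, r ∈ (0,R]} be a two-parameter family of nonempty open subsets of ℝ^M satisfying: (i) nestedness: for any x ∈ Ω and 0 < s < r ≤ R, U(x,s) ⊂ U(x,r); (ii) there exists c₁ > 1 such that U(x,r) ∩ U(y,r) ≠ ∅ implies U(x,r) ⊂ U(y, c₁ r). Then there exists a countable pairwise disjoint subfamily {U_i}_{i∈ℕ} = {U(x_i, r_i)}_{i∈ℕ} such that ⋃_{x∈Ω, r∈(0, R/c₁]} U(x,r) ⊂ ⋃_{i∈ℕ} Ũ_i, where Ũ_i = U(x_i, 2c₁ r_i). -/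
open MeasureTheory Set
open scoped ENNReal RealInnerProductSpace

noncomputable section

variable {n : ℕ}

/-- **Lemma 5.4 (Vitali-type covering lemma).**
Let `Ω ⊂ ℝ^M`, `R > 0`, and let `{U(x,r)}` be a two-parameter family of nonempty open sets
which is nested and satisfies the engulfing property with constant `c₁ > 1`. Then there is a
countable pairwise disjoint subfamily `{U(xᵢ,rᵢ)}` such that every `U(x,r)` with `x ∈ Ω` and
`r ∈ (0, R/c₁]` is contained in `⋃ᵢ U(xᵢ, 2c₁ rᵢ)`. -/
theorem vitali_type_covering
    (M : ℕ) (Ω : Set (EuclideanSpace ℝ (Fin M))) (R c₁ : ℝ) (hR : 0 < R) (hc₁ : 1 < c₁)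
    (U : EuclideanSpace ℝ (Fin M) → ℝ → Set (EuclideanSpace ℝ (Fin M)))
    (hne : ∀ x ∈ Ω, ∀ r : ℝ, 0 < r → (U x r).Nonempty ∧ IsOpen (U x r))
    (hnested : ∀ x ∈ Ω, ∀ s r : ℝ, 0 < s → s < r → U x s ⊆ U x r)
    (hengulf : ∀ x ∈ Ω, ∀ y ∈ Ω, ∀ r : ℝ, 0 < r →
      (U x r ∩ U y r).Nonempty → U x r ⊆ U y (c₁ * r)) :
    ∃ cov : Set (EuclideanSpace ℝ (Fin M) × ℝ), cov.Countable ∧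
      (∀ p ∈ cov, p.1 ∈ Ω ∧ 0 < p.2 ∧ p.2 ≤ R) ∧
      cov.PairwiseDisjoint (fun p => U p.1 p.2) ∧
      (⋃ x ∈ Ω, ⋃ r ∈ Set.Ioc (0 : ℝ) (R / c₁), U x r)
        ⊆ ⋃ p ∈ cov, U p.1 (2 * c₁ * p.2) := by
  obtain ⟨u, hut, hdisj, hcov⟩ :=
    Vitali.exists_disjoint_subfamily_covering_enlargement
      (fun p : EuclideanSpace ℝ (Fin M) × ℝ => U p.1 p.2)
      (Ω ×ˢ Set.Ioc (0 : ℝ) (R / c₁)) (fun p => p.2) 2 one_lt_two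
      (fun p hp => (hp.2.1).le) (R / c₁) (fun p hp => hp.2.2)
      (fun p hp => (hne p.1 hp.1 p.2 hp.2.1).1)
  have hmem : ∀ p ∈ u, p.1 ∈ Ω ∧ 0 < p.2 ∧ p.2 ≤ R := by
    intro p hp
    obtain ⟨h1, h2, h3⟩ := hut hp
    exact ⟨h1, h2, h3.trans (div_le_self hR.le hc₁.le)⟩
  refine ⟨u, ?_, hmem, hdisj, ?_⟩
  · exact hdisj.countable_of_isOpen
      (fun p hp => (hne p.1 (hmem p hp).1 p.2 (hmem p hp).2.1).2)
      (fun p hp => (hne p.1 (hmem p hp).1 p.2 (hmem p hp).2.1).1)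
  · intro z hz
    simp only [Set.mem_iUnion] at hz ⊢
    obtain ⟨x, hx, r, hr, hzU⟩ := hz
    obtain ⟨b, hbu, hinter, hle⟩ := hcov (x, r) ⟨hx, hr⟩
    obtain ⟨y, s⟩ := b
    obtain ⟨hyΩ, hs, _⟩ := hmem _ hbu
    have hsub1 : U x r ⊆ U x (2 * s) := by
      rcases lt_or_eq_of_le (by linarith [hle] : r ≤ 2 * s) with h | h
      · exact hnested x hx r (2 * s) hr.1 h
      · rw [h]
    have hsub2 : U y s ⊆ U y (2 * s) := hnested y hyΩ s (2 * s) hs (by linarith)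
    obtain ⟨w, hw1, hw2⟩ := hinter
    have hint2 : (U x (2 * s) ∩ U y (2 * s)).Nonempty :=
      ⟨w, hsub1 hw1, hsub2 hw2⟩
    have heng := hengulf x hx y hyΩ (2 * s) (by linarith) hint2
    refine ⟨(y, s), hbu, ?_⟩
    have : c₁ * (2 * s) = 2 * c₁ * s := by ring
    rw [this] at heng
    exact heng (hsub1 hzU)
end
end
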